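/- arXiv:1711.09387 — 3 statements merged into one kernel-verified Lean document; each statement's English description precedes it below -/
import Mathlib

section
/- Let V be a finite-dimensional real vector space equipped with a Hodge filtration F of weight n. For integers p, q with p + q = n, set V^{p,q} := F^p ∩ σ(F^q) ⊆ V_ℂ. Then V_ℂ is the internal direct sum of the subspaces V^{p,q} over all pairs (p,q) with p + q = n, and σ(V^{p,q}) = V^{q,p} for all such (p,q). -/
open scoped TensorProduct

private lemma sigmaC_aux (V : Type*) [AddCommGroup V] [Module ℝ V] (c : ℂ) (x : ℂ ⊗[ℝ] V) :
    TensorProduct.map Complex.conjAe.toLinearMap LinearMap.id (c • x) =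
      (starRingEnd ℂ) c • TensorProduct.map Complex.conjAe.toLinearMap LinearMap.id x := by
  induction x using TensorProduct.induction_on with
  | zero => simp
  | tmul z v => simp [TensorProduct.smul_tmul', smul_eq_mul, map_mul]
  | add x y hx hy => simp only [smul_add, map_add, hx, hy]

/-- The conjugation involution `σ` of the complexification `ℂ ⊗[ℝ] V`,
as a `conj`-semilinear map. -/
noncomputable def sigmaC (V : Type*) [AddCommGroup V] [Module ℝ V] :
    (ℂ ⊗[ℝ] V) →ₛₗ[starRingEnd ℂ] (ℂ ⊗[ℝ] V) where
  toFun := TensorProduct.map Complex.conjAe.toLinearMap LinearMap.id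
  map_add' x y := map_add _ x y
  map_smul' c x := sigmaC_aux V c x

/-- A Hodge filtration of weight `n` on the real vector space `V`. -/
def IsHodgeFiltration (V : Type*) [AddCommGroup V] [Module ℝ V]
    (n : ℤ) (F : ℤ → Submodule ℂ (ℂ ⊗[ℝ] V)) : Prop :=
  (∀ p : ℤ, F (p + 1) ≤ F p) ∧
  (∃ a : ℤ, ∀ p ≤ a, F p = ⊤) ∧
  (∃ b : ℤ, ∀ p ≥ b, F p = ⊥) ∧
  (∀ p : ℤ, IsCompl (F p) ((F (n - p + 1)).map (sigmaC V)))


private lemma sigma_sigma {V : Type*} [AddCommGroup V] [Module ℝ V] (x : ℂ ⊗[ℝ] V) :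
    sigmaC V (sigmaC V x) = x := by
  show TensorProduct.map Complex.conjAe.toLinearMap LinearMap.id
      (TensorProduct.map Complex.conjAe.toLinearMap LinearMap.id x) = x
  induction x using TensorProduct.induction_on with
  | zero => simp
  | tmul z v => simp
  | add x y hx hy => rw [map_add, map_add, hx, hy]

private lemma mem_map_sigma {V : Type*} [AddCommGroup V] [Module ℝ V]
    {s : Submodule ℂ (ℂ ⊗[ℝ] V)} {x : ℂ ⊗[ℝ] V} :
    x ∈ s.map (sigmaC V) ↔ sigmaC V x ∈ s := by
  constructor
  · rintro ⟨y, hy, rfl⟩; rwa [sigma_sigma]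
  · intro h; exact ⟨sigmaC V x, h, sigma_sigma x⟩

/-- For a Hodge filtration `F` of weight `n` on a finite-dimensional real
vector space `V`, setting `V^{p,q} := F^p ⊓ σ(F^q)` for `p + q = n` (here indexed by `p`,
with `q = n - p`), the complexification `V_ℂ` is the internal direct sum of the `V^{p,q}`,
and `σ(V^{p,q}) = V^{q,p}`. -/
theorem hodge_decomposition (V : Type*) [AddCommGroup V] [Module ℝ V] [FiniteDimensional ℝ V]
    (n : ℤ) (F : ℤ → Submodule ℂ (ℂ ⊗[ℝ] V)) (hF : IsHodgeFiltration V n F) :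
    DirectSum.IsInternal (fun p : ℤ => F p ⊓ (F (n - p)).map (sigmaC V)) ∧
    (∀ p q : ℤ, p + q = n →
      (F p ⊓ (F q).map (sigmaC V)).map (sigmaC V) = F q ⊓ (F p).map (sigmaC V)) := by
  obtain ⟨hdec, ⟨a, ha⟩, ⟨b, hb⟩, hcompl⟩ := hF
  have hmono : ∀ p q : ℤ, p ≤ q → F q ≤ F p := by
    intro p q h
    obtain ⟨k, rfl⟩ : ∃ k : ℕ, q = p + k := ⟨(q - p).toNat, by omega⟩
    clear h
    induction k with
    | zero => simp
    | succ k ih =>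
      refine le_trans ?_ ih
      have := hdec (p + k)
      push_cast at this ⊢
      convert this using 2; ring
  set W : ℤ → Submodule ℂ (ℂ ⊗[ℝ] V) := fun p => F p ⊓ (F (n - p)).map (sigmaC V) with hW
  have hcompl' : ∀ p : ℤ, IsCompl (F (p + 1)) ((F (n - p)).map (sigmaC V)) := by
    intro p
    have := hcompl (p + 1)
    have h : n - (p + 1) + 1 = n - p := by ring
    rwa [h] at this
  constructor
  · rw [DirectSum.isInternal_submodule_iff_iSupIndep_and_iSup_eq_top]
    constructor
    · intro p
      have hle : (⨆ (q) (_ : q ≠ p), W q) ≤ F (p + 1) ⊔ (F (n - p + 1)).map (sigmaC V) := by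
        refine iSup₂_le fun q hq => ?_
        rcases lt_or_gt_of_ne hq with h | h
        · refine le_trans inf_le_right (le_trans ?_ le_sup_right)
          exact Submodule.map_mono (hmono _ _ (by omega))
        · exact le_trans inf_le_left (le_trans (hmono _ _ (by omega)) le_sup_left)
      refine Disjoint.mono_right hle ?_
      rw [Submodule.disjoint_def]
      rintro x ⟨hx1, hx2⟩ hx3
      obtain ⟨y, hy, z, hz, hyz⟩ := Submodule.mem_sup.mp hx3
      have hzF : z ∈ F p := by
        have hzeq : z = x - y := by rw [← hyz]; abel
        rw [hzeq]
        exact sub_mem hx1 (hdec p hy)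
      have hz0 : z = 0 := by
        have hd := (hcompl p).disjoint
        rw [Submodule.disjoint_def] at hd
        exact hd z hzF hz
      have hxy : x = y := by rw [← hyz, hz0, add_zero]
      have hd := (hcompl' p).disjoint
      rw [Submodule.disjoint_def] at hd
      exact hd x (hxy ▸ hy) hx2
    · have key : ∀ k : ℕ, ∀ p : ℤ, b - k ≤ p → F p ≤ ⨆ q, W q := by
        intro k
        induction k with
        | zero => intro p hp; rw [hb p (by omega)]; exact bot_le
        | succ k ih =>
          intro p hp
          by_cases h : b - k ≤ p
          · exact ih p h
          · intro x hx
            have htop := (hcompl' p).codisjoint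
            rw [codisjoint_iff] at htop
            have hx' : x ∈ F (p + 1) ⊔ (F (n - p)).map (sigmaC V) :=
              htop ▸ Submodule.mem_top
            obtain ⟨y, hy, z, hz, hyz⟩ := Submodule.mem_sup.mp hx'
            have hzF : z ∈ F p := by
              have hzeq : z = x - y := by rw [← hyz]; abel
              rw [hzeq]
              exact sub_mem hx (hdec p hy)
            have hzW : z ∈ W p := ⟨hzF, hz⟩
            have hyS : y ∈ ⨆ q, W q := ih (p + 1) (by omega) hy
            rw [← hyz]
            exact add_mem hyS (le_iSup W p hzW)
      rw [eq_top_iff]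
      have ha' : F (min a b) = ⊤ := ha _ (min_le_left _ _)
      calc (⊤ : Submodule ℂ (ℂ ⊗[ℝ] V)) = F (min a b) := ha'.symm
        _ ≤ ⨆ q, W q := key (b - min a b).toNat _ (by omega)
  · intro p q h
    ext x
    simp only [Submodule.mem_inf, mem_map_sigma, sigma_sigma]
    tauto
end

section
/- Let V be a finite-dimensional real vector space equipped with a Hodge filtration F of weight n, and set V^{p,q} := F^p ∩ σ(F^q) for p + q = n. Then for every integer p one has F^p = ⊕_{p' ≥ p} V^{p', n-p'}, i.e. F^p is the (internal direct) sum of the subspaces F^{p'} ∩ σ(F^{n-p'}) over all p' ≥ p. -/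
open scoped TensorProduct

/-- For a Hodge filtration `F` of weight `n` on a finite-dimensional real
vector space `V`, with `V^{p,q} := F^p ⊓ σ(F^q)` for `p + q = n`, one has
`F^p = ⊕_{p' ≥ p} V^{p', n-p'}`. -/
theorem hodge_filtration_eq_iSup (V : Type*) [AddCommGroup V] [Module ℝ V]
    [FiniteDimensional ℝ V]
    (n : ℤ) (F : ℤ → Submodule ℂ (ℂ ⊗[ℝ] V)) (hF : IsHodgeFiltration V n F) :
    ∀ p : ℤ, F p = ⨆ (p' : ℤ) (_ : p ≤ p'), (F p' ⊓ (F (n - p')).map (sigmaC V)) := by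
  obtain ⟨hdec, -, ⟨b, hb⟩, hcompl⟩ := hF
  -- σ is an involution
  have hsig : ∀ x : ℂ ⊗[ℝ] V, sigmaC V (sigmaC V x) = x := by
    intro x
    induction x using TensorProduct.induction_on with
    | zero => simp
    | tmul z v =>
        show TensorProduct.map _ _ (TensorProduct.map _ _ (z ⊗ₜ[ℝ] v)) = z ⊗ₜ[ℝ] v
        simp
    | add x y hx hy =>
        rw [map_add, map_add, hx, hy]
  -- F is antitone
  have hmono : ∀ p q : ℤ, p ≤ q → F q ≤ F p := by
    intro p q hpq
    obtain ⟨k, rfl⟩ : ∃ k : ℕ, q = p + k := ⟨(q - p).toNat, by omega⟩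
    clear hpq
    induction k with
    | zero => simp
    | succ k ih =>
        refine le_trans ?_ ih
        have h := hdec (p + k)
        convert h using 2
        push_cast; ring
  set RHS : ℤ → Submodule ℂ (ℂ ⊗[ℝ] V) :=
    fun p => ⨆ (p' : ℤ) (_ : p ≤ p'), (F p' ⊓ (F (n - p')).map (sigmaC V)) with hRHS
  have hRHSmono : ∀ p q : ℤ, p ≤ q → RHS q ≤ RHS p := by
    intro p q hpq
    refine iSup₂_le fun p' hp' => le_iSup₂_of_le p' (le_trans hpq hp') le_rfl
  -- hard direction by descending induction
  have hard : ∀ k : ℕ, ∀ p : ℤ, b ≤ p + k → F p ≤ RHS p := by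
    intro k
    induction k with
    | zero =>
        intro p hp
        rw [hb p (by omega)]
        exact bot_le
    | succ k ih =>
        intro p hp
        have ih' : F (p + 1) ≤ RHS (p + 1) := ih (p + 1) (by push_cast; omega)
        intro v hv
        -- use the complement at index n - p
        have hc := (hcompl (n - p)).codisjoint
        rw [codisjoint_iff] at hc
        have hnp : n - (n - p) + 1 = p + 1 := by ring
        rw [hnp] at hc
        have hmem : sigmaC V v ∈ F (n - p) ⊔ (F (p + 1)).map (sigmaC V) := by
          rw [hc]; trivial
        obtain ⟨x, hx, y, hy, hxy⟩ := Submodule.mem_sup.mp hmem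
        obtain ⟨w, hw, hwy⟩ := hy
        have hv' : v = sigmaC V x + w := by
          have : sigmaC V (sigmaC V v) = sigmaC V x + sigmaC V y := by
            rw [← hxy, map_add]
          rw [hsig] at this
          rw [this, ← hwy, hsig]
        have hsx_Fp : sigmaC V x ∈ F p := by
          have hwFp : w ∈ F p := hdec p hw
          have : sigmaC V x = v - w := by rw [hv']; abel
          rw [this]
          exact Submodule.sub_mem _ hv hwFp
        have hsx : sigmaC V x ∈ F p ⊓ (F (n - p)).map (sigmaC V) :=
          ⟨hsx_Fp, ⟨x, hx, rfl⟩⟩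
        have h1 : sigmaC V x ∈ RHS p :=
          (le_iSup₂_of_le p le_rfl le_rfl : F p ⊓ (F (n - p)).map (sigmaC V) ≤ RHS p) hsx
        have h2 : w ∈ RHS p := hRHSmono p (p + 1) (by omega) (ih' hw)
        rw [hv']
        exact Submodule.add_mem _ h1 h2
  intro p
  refine le_antisymm (hard (b - p).toNat p (by omega)) ?_
  exact iSup₂_le fun p' hp' => le_trans inf_le_left (hmono p p' hp')
end

section
/- Let V and V' be finite-dimensional real vector spaces equipped with Hodge filtrations F and F' of the same weight n, and let f : V → V' be an ℝ-linear map with f_ℂ(F^p) ⊆ F'^p for all p. Then f is strictly compatible with the Hodge filtrations: f_ℂ(F^p) = range(f_ℂ) ∩ F'^p for every integer p. -/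
open scoped TensorProduct

private lemma baseChange_sigmaC_comm {V V' : Type*} [AddCommGroup V] [Module ℝ V]
    [AddCommGroup V'] [Module ℝ V'] (f : V →ₗ[ℝ] V') (x : ℂ ⊗[ℝ] V) :
    f.baseChange ℂ (sigmaC V x) = sigmaC V' (f.baseChange ℂ x) := by
  induction x using TensorProduct.induction_on with
  | zero => simp
  | tmul z v => simp [sigmaC, LinearMap.baseChange_tmul]
  | add x y hx hy => simp only [map_add, hx, hy]

/-- A morphism of pure Hodge structures of the same weight `n` is strictly
compatible with the Hodge filtrations: `f_ℂ(F^p) = range(f_ℂ) ⊓ F'^p` for every `p`. -/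
theorem hodge_morphism_strict (V V' : Type*)
    [AddCommGroup V] [Module ℝ V] [FiniteDimensional ℝ V]
    [AddCommGroup V'] [Module ℝ V'] [FiniteDimensional ℝ V']
    (n : ℤ) (F : ℤ → Submodule ℂ (ℂ ⊗[ℝ] V)) (F' : ℤ → Submodule ℂ (ℂ ⊗[ℝ] V'))
    (hF : IsHodgeFiltration V n F) (hF' : IsHodgeFiltration V' n F')
    (f : V →ₗ[ℝ] V') (hf : ∀ p : ℤ, (F p).map (f.baseChange ℂ) ≤ F' p) :
    ∀ p : ℤ, (F p).map (f.baseChange ℂ) = LinearMap.range (f.baseChange ℂ) ⊓ F' p := by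
  intro p
  apply le_antisymm
  · rintro y ⟨x, hx, rfl⟩
    exact ⟨LinearMap.mem_range_self _ x, hf p ⟨x, hx, rfl⟩⟩
  · rintro y ⟨⟨x, rfl⟩, hy⟩
    have hx : x ∈ F p ⊔ (F (n - p + 1)).map (sigmaC V) := by
      rw [codisjoint_iff.mp (hF.2.2.2 p).codisjoint]; trivial
    obtain ⟨x₁, hx₁, x₂, hx₂, rfl⟩ := Submodule.mem_sup.mp hx
    obtain ⟨w, hw, rfl⟩ := hx₂
    have hfx₁ : f.baseChange ℂ x₁ ∈ F' p := hf p ⟨x₁, hx₁, rfl⟩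
    have hmem : f.baseChange ℂ (sigmaC V w) ∈ F' p ⊓ (F' (n - p + 1)).map (sigmaC V') := by
      constructor
      · have : f.baseChange ℂ (sigmaC V w)
            = f.baseChange ℂ (x₁ + sigmaC V w) - f.baseChange ℂ x₁ := by
          rw [map_add]; abel
        rw [this]
        exact Submodule.sub_mem _ hy hfx₁
      · exact ⟨f.baseChange ℂ w, hf _ ⟨w, hw, rfl⟩, (baseChange_sigmaC_comm f w).symm⟩
    have hzero : f.baseChange ℂ (sigmaC V w) = 0 := by
      have := (hF'.2.2.2 p).disjoint.le_bot hmem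
      simpa using this
    exact ⟨x₁, hx₁, by rw [map_add, hzero, add_zero]⟩
end
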